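/- arXiv:1409.7004 — 2 statements merged into one kernel-verified Lean document; each statement's English description precedes it below -/
import Mathlib

section
/- Let n ≥ 4 and let <_τ be a monomial order on ℕ^n such that for every i with 1 ≤ i ≤ n, the i-th induced ordering of <_τ equals the i-th induced ordering of the graded lexicographic order. Then <_τ is the graded lexicographic order on ℕ^n. -/
open Matrix BigOperators

/-- Lexicographic order on `Fin n → α`: `a < b` iff at the first index where they
differ, `a` is smaller (equivalently, the leftmost nonzero entry of `b - a` is positive). -/
def lexLt {n : ℕ} {α : Type*} [LinearOrder α] (a b : Fin n → α) : Prop :=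
  ∃ i : Fin n, a i < b i ∧ ∀ j : Fin n, j < i → a j = b j

/-- A monomial order on `ℕ^n`: a (strict) total order with `0` minimal,
compatible with addition. -/
def IsMonomialOrder {n : ℕ} (r : (Fin n → ℕ) → (Fin n → ℕ) → Prop) : Prop :=
  IsStrictTotalOrder (Fin n → ℕ) r ∧
  (∀ a : Fin n → ℕ, a ≠ 0 → r 0 a) ∧
  (∀ a b c : Fin n → ℕ, r a b → r (a + c) (b + c))

/-- Graded lexicographic order on `ℕ^n`. -/
def degLexLt {n : ℕ} (a b : Fin n → ℕ) : Prop :=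
  (∑ i, a i) < (∑ i, b i) ∨ ((∑ i, a i) = (∑ i, b i) ∧ lexLt a b)

/-- Reverse lexicographic order on `ℕ^n`: compare degrees first; for equal degrees,
`a < b` iff the rightmost nonzero entry of `b - a` is negative. -/
def revLexLt {n : ℕ} (a b : Fin n → ℕ) : Prop :=
  (∑ i, a i) < (∑ i, b i) ∨
  ((∑ i, a i) = (∑ i, b i) ∧ ∃ i : Fin n, b i < a i ∧ ∀ j : Fin n, i < j → a j = b j)

/-!
A monomial order is cancellative, so `r a b` depends only on the difference `b - a ∈ ℤⁿ`, and
the differences it calls positive are closed under addition. By hypothesis `r` agrees with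
deglex on differences having a zero coordinate. A deglex-positive `d` with `d 0 ≠ 0` and
`d 2 ≠ 0` splits as `e + f` with `e = Pi.single j c - Pi.single l c` a transfer between
coordinate 2 and its neighbour 1 or 3 (according to the sign of `d 2`) chosen so that `f 2 = 0`;
then `e 0 = 0`, and `f` is still deglex-positive since it has the degree and first coordinate
of `d`. This needs coordinates 1, 2, 3 distinct from 0, whence `n ≥ 4`. So deglex is contained
in `r`, and two strict total orders one contained in the other coincide.
-/

section Lex

variable {n : ℕ}

lemma lexLt_iff_toLex_lt {α : Type*} [LinearOrder α] {a b : Fin n → α} :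
    lexLt a b ↔ toLex a < toLex b :=
  ⟨fun ⟨i, hlt, heq⟩ => ⟨i, heq, hlt⟩, fun ⟨i, heq, hlt⟩ => ⟨i, hlt, heq⟩⟩

lemma lexLt.apply_zero_lt {α : Type*} [LinearOrder α] {a b : Fin (n + 1) → α} (h : lexLt a b)
    (h0 : a 0 ≠ b 0) : a 0 < b 0 := by
  obtain ⟨i, hlt, hprefix⟩ := h
  by_cases hi : i = 0
  · exact hi ▸ hlt
  · exact absurd (hprefix 0 (Fin.pos_of_ne_zero hi)) h0

lemma degLexLt_or_degLexLt_of_ne {a b : Fin n → ℕ} (hab : a ≠ b) :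
    degLexLt a b ∨ degLexLt b a := by
  rcases lt_trichotomy (∑ i, a i) (∑ i, b i) with hs | hs | hs
  · exact Or.inl (Or.inl hs)
  · rcases lt_or_gt_of_ne (toLex.injective.ne hab) with h | h
    · exact Or.inl (Or.inr ⟨hs, lexLt_iff_toLex_lt.2 h⟩)
    · exact Or.inr (Or.inr ⟨hs.symm, lexLt_iff_toLex_lt.2 h⟩)
  · exact Or.inr (Or.inl hs)

def degLexPos (d : Fin n → ℤ) : Prop :=
  0 < ∑ i, d i ∨ (∑ i, d i = 0 ∧ lexLt 0 d)

lemma degLexLt_iff_degLexPos_sub {a b : Fin n → ℕ} :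
    degLexLt a b ↔ degLexPos (fun i => (b i : ℤ) - a i) := by
  have hlex : lexLt a b ↔ lexLt 0 (fun i => (b i : ℤ) - a i) := by
    simp only [lexLt, Pi.zero_apply, sub_pos, Nat.cast_lt, eq_comm (a := (0 : ℤ)), sub_eq_zero,
      Nat.cast_inj, eq_comm (a := b _)]
  have hsum : ∑ i, ((b i : ℤ) - a i) = ((∑ i, b i : ℕ) : ℤ) - (∑ i, a i : ℕ) := by
    push_cast
    exact Finset.sum_sub_distrib ..
  rw [degLexLt, degLexPos, hsum, hlex, sub_pos, sub_eq_zero, Nat.cast_lt, Nat.cast_inj,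
    eq_comm (a := ∑ i, b i)]

lemma degLexPos_single_sub_single {i j : Fin n} (hij : i < j) {c : ℤ} (hc : 0 < c) :
    degLexPos (Pi.single i c - Pi.single j c) :=
  Or.inr ⟨by simp [Finset.sum_sub_distrib], i, by simp [hij.ne, hc],
    fun k hk => by simp [hk.ne, (hk.trans hij).ne]⟩

lemma degLexPos_sub {d e : Fin (n + 1) → ℤ} (hd : degLexPos d) (hd0 : d 0 ≠ 0)
    (he : ∑ i, e i = 0) (he0 : e 0 = 0) : degLexPos (d - e) := by
  have hsum : ∑ i, (d - e) i = ∑ i, d i := by simp [Finset.sum_sub_distrib, he]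
  rcases hd with hpos | ⟨hzero, hlex⟩
  · exact Or.inl (hsum ▸ hpos)
  · exact Or.inr ⟨hsum ▸ hzero, 0, by simpa [he0] using hlex.apply_zero_lt hd0.symm,
      fun j hj => absurd hj (Fin.not_lt_zero j)⟩

lemma exists_degLexPos_add {d : Fin (n + 1) → ℤ} {j k l : Fin (n + 1)} (hj : 0 < j)
    (hjk : j < k) (hkl : k < l) (hd : degLexPos d) (h0 : d 0 ≠ 0) (hk : d k ≠ 0) :
    ∃ e f : Fin (n + 1) → ℤ, e + f = d ∧ degLexPos e ∧ degLexPos f ∧ e 0 = 0 ∧ f k = 0 := by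
  have h0j : (0 : Fin (n + 1)) ≠ j := hj.ne
  have h0k : (0 : Fin (n + 1)) ≠ k := (hj.trans hjk).ne
  obtain ⟨e, he, he_sum, he0, hek⟩ :
      ∃ e : Fin (n + 1) → ℤ, degLexPos e ∧ ∑ i, e i = 0 ∧ e 0 = 0 ∧ e k = d k := by
    rcases hk.lt_or_gt with hneg | hpos
    · refine ⟨Pi.single j (-d k) - Pi.single k (-d k),
        degLexPos_single_sub_single hjk (by omega), ?_, ?_, ?_⟩ <;>
        simp [Finset.sum_sub_distrib, h0j, h0k, hjk.ne']
    · refine ⟨Pi.single k (d k) - Pi.single l (d k),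
        degLexPos_single_sub_single hkl hpos, ?_, ?_, ?_⟩ <;>
        simp [Finset.sum_sub_distrib, h0k, (hj.trans (hjk.trans hkl)).ne, hkl.ne]
  exact ⟨e, d - e, add_sub_cancel e d, he, degLexPos_sub hd h0 he_sum he0, he0, by simp [hek]⟩

end Lex

namespace IsMonomialOrder

variable {n : ℕ} {r : (Fin n → ℕ) → (Fin n → ℕ) → Prop}

lemma add_right_iff (hr : IsMonomialOrder r) {a b : Fin n → ℕ} (c : Fin n → ℕ) :
    r (a + c) (b + c) ↔ r a b := by
  have := hr.1
  refine ⟨fun h => ?_, hr.2.2 a b c⟩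
  rcases trichotomous_of r a b with hab | rfl | hba
  · exact hab
  · exact absurd h (irrefl _)
  · exact absurd (hr.2.2 b a c hba) (asymm h)

lemma add_add (hr : IsMonomialOrder r) {a b a' b' : Fin n → ℕ} (h : r a b) (h' : r a' b') :
    r (a + a') (b + b') :=
  hr.1.trans _ _ _ (hr.2.2 a b a' h) (by simpa only [add_comm b] using hr.2.2 a' b' b h')

lemma iff_of_sub_eq (hr : IsMonomialOrder r) {a b a' b' : Fin n → ℕ}
    (h : ∀ i, (b i : ℤ) - a i = b' i - a' i) : r a b ↔ r a' b' := by
  have hcross : b + a' = a + b' := funext fun i => by have := h i; simp only [Pi.add_apply]; omega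
  rw [← hr.add_right_iff a', hcross, add_comm a a', add_comm a b', hr.add_right_iff]

end IsMonomialOrder

lemma rel_negPart_posPart_of_apply_eq_zero {n : ℕ} {r : (Fin n → ℕ) → (Fin n → ℕ) → Prop}
    (hind : ∀ i : Fin n, ∀ a b : Fin n → ℕ, a i = 0 → b i = 0 → (r a b ↔ degLexLt a b))
    {d : Fin n → ℤ} (hd : degLexPos d) {i : Fin n} (hi : d i = 0) :
    r (fun j => (-d j).toNat) (fun j => (d j).toNat) := by
  rw [hind i _ _ (by simp [hi]) (by simp [hi]), degLexLt_iff_degLexPos_sub]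
  simpa only [Int.toNat_sub_toNat_neg] using hd

lemma rel_negPart_posPart {n : ℕ} (hn : 3 ≤ n)
    {r : (Fin (n + 1) → ℕ) → (Fin (n + 1) → ℕ) → Prop} (hr : IsMonomialOrder r)
    (hind : ∀ i, ∀ a b : Fin (n + 1) → ℕ, a i = 0 → b i = 0 → (r a b ↔ degLexLt a b))
    {d : Fin (n + 1) → ℤ} (hd : degLexPos d) :
    r (fun j => (-d j).toNat) (fun j => (d j).toNat) := by
  set k : Fin (n + 1) := ⟨2, by omega⟩
  by_cases hzero : d 0 = 0 ∨ d k = 0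
  · obtain h | h := hzero <;> exact rel_negPart_posPart_of_apply_eq_zero hind hd h
  obtain ⟨h0, hk⟩ := not_or.1 hzero
  obtain ⟨e, f, rfl, he, hf, he0, hfk⟩ := exists_degLexPos_add (j := ⟨1, by omega⟩) (k := k)
    (l := ⟨3, by omega⟩) (by simp [Fin.lt_def]) (Fin.mk_lt_mk.2 (by omega))
    (Fin.mk_lt_mk.2 (by omega)) hd h0 hk
  refine (hr.iff_of_sub_eq fun i => ?_).1 <| hr.add_add
    (rel_negPart_posPart_of_apply_eq_zero hind he he0)
    (rel_negPart_posPart_of_apply_eq_zero hind hf hfk)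
  simp only [Pi.add_apply, Nat.cast_add, neg_add]
  omega

lemma rel_of_degLexLt {n : ℕ} (hn : 3 ≤ n)
    {r : (Fin (n + 1) → ℕ) → (Fin (n + 1) → ℕ) → Prop} (hr : IsMonomialOrder r)
    (hind : ∀ i, ∀ a b : Fin (n + 1) → ℕ, a i = 0 → b i = 0 → (r a b ↔ degLexLt a b))
    {a b : Fin (n + 1) → ℕ} (hab : degLexLt a b) : r a b :=
  (hr.iff_of_sub_eq fun i => by simp only [Int.toNat_sub_toNat_neg]).2 <|
    rel_negPart_posPart hn hr hind (degLexLt_iff_degLexPos_sub.1 hab)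

/-- If `n ≥ 4` and all induced orderings of a monomial order agree with those of
the graded lexicographic order, then the order is the graded lexicographic order. -/
theorem stmt_6 {n : ℕ} (hn : 4 ≤ n) (r : (Fin n → ℕ) → (Fin n → ℕ) → Prop)
    (hr : IsMonomialOrder r)
    (hind : ∀ i : Fin n, ∀ a b : Fin n → ℕ, a i = 0 → b i = 0 → (r a b ↔ degLexLt a b)) :
    ∀ a b : Fin n → ℕ, r a b ↔ degLexLt a b := by
  obtain ⟨m, rfl⟩ : ∃ m, n = m + 1 := ⟨n - 1, by omega⟩
  have hdeg : ∀ {a b}, degLexLt a b → r a b := rel_of_degLexLt (by omega) hr hind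
  have := hr.1
  intro a b
  refine ⟨fun hab => ?_, hdeg⟩
  rcases eq_or_ne a b with rfl | hne
  · exact absurd hab (irrefl a)
  · exact (degLexLt_or_degLexLt_of_ne hne).resolve_right fun hba => asymm hab (hdeg hba)
end

section
/- For every n ≥ 4 there exist two distinct monomial orders <_τ and <_{τ'} on ℕ^n whose induced orderings agree for every i: for each 1 ≤ i ≤ n, the restrictions of <_τ and <_{τ'} to {α ∈ ℕ^n : α_i = 0} coincide. -/
open Matrix BigOperators

/-! Order exponents first by the linear forms `∑ αᵢ` and `α_k - α_m` (`1 ≤ k < m`) on `ℕ^(m+1)`.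
Over `ℤ` they vanish exactly on the line spanned by `v = (-m, 1, …, 1)`, and ties are broken by
`+α₀` or by `-α₀`. The two resulting monomial orders differ on the pair `(m, 0, …, 0)`,
`(0, 1, …, 1)`, whose difference is `-v`. But two exponents with a common coordinate never
differ by a nonzero multiple of `v`, which has no zero entry, so on each coordinate hyperplane
the tie-break is never reached and the two orders agree. -/

open Function

theorem isMonomialOrder_of_injective {n : ℕ} {Γ : Type*} [AddCommMonoid Γ] [LinearOrder Γ]
    [IsOrderedCancelAddMonoid Γ] (φ : (Fin n → ℕ) →+ Γ) (hφ : Injective φ)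
    (hpos : ∀ a, a ≠ 0 → 0 < φ a) :
    IsMonomialOrder fun a b => φ a < φ b := by
  refine ⟨{ trichotomous := fun a b hab hba => hφ (le_antisymm (not_lt.1 hba) (not_lt.1 hab))
            irrefl := fun a => lt_irrefl (φ a)
            trans := fun a b c => lt_trans }, fun a ha => ?_, fun a b c h => ?_⟩
  · simpa using hpos a ha
  · simpa only [map_add] using add_lt_add_left h (φ c)

section

variable {m : ℕ}

-- The last row `d m - d m` is zero; it only pads the vector to length `m + 1`.
def degDiffs : (Fin (m + 1) → ℤ) →+ (Fin (m + 1) → ℤ) where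
  toFun d := Fin.cons (∑ i, d i) fun k => d k.succ - d (Fin.last m)
  map_zero' := by
    ext k
    cases k using Fin.cases <;> simp
  map_add' d e := by
    ext k
    cases k using Fin.cases
    · simp [Finset.sum_add_distrib]
    · simp only [Fin.cons_succ, Pi.add_apply]; ring

def kerVec (m : ℕ) : Fin (m + 1) → ℤ := Fin.cons (-m) 1

theorem kerVec_apply_ne_zero (hm : m ≠ 0) (i : Fin (m + 1)) : kerVec m i ≠ 0 := by
  cases i using Fin.cases <;> simp [kerVec, hm]

theorem eq_smul_kerVec_of_degDiffs_eq_zero {d : Fin (m + 1) → ℤ} (hd : degDiffs d = 0) :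
    d = d (Fin.last m) • kerVec m := by
  have hsum : ∑ i, d i = 0 := by simpa [degDiffs] using congrFun hd 0
  have hsucc (k : Fin m) : d k.succ = d (Fin.last m) := by
    simpa [degDiffs, sub_eq_zero] using congrFun hd k.succ
  ext k
  cases k using Fin.cases
  · rw [Fin.sum_univ_succ] at hsum
    simp [kerVec, hsucc] at hsum ⊢
    linarith
  · simp [kerVec, hsucc]

theorem eq_of_degDiffs_eq (hm : m ≠ 0) {x y : Fin (m + 1) → ℤ} (h : degDiffs x = degDiffs y)
    {i : Fin (m + 1)} (hi : x i = y i) : x = y := by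
  have hvec := eq_smul_kerVec_of_degDiffs_eq_zero (show degDiffs (x - y) = 0 by
    rw [map_sub, h, sub_self])
  have hc : (x - y) (Fin.last m) = 0 := by
    have hdi := congrFun hvec i
    rw [Pi.sub_apply, hi, sub_self, Pi.smul_apply, smul_eq_mul, eq_comm] at hdi
    exact (mul_eq_zero.1 hdi).resolve_right (kerVec_apply_ne_zero hm i)
  rwa [hc, zero_smul, sub_eq_zero] at hvec

def lexWeight (ε : ℤ) : (Fin (m + 1) → ℕ) →+ Lex (Lex (Fin (m + 1) → ℤ) × ℤ) where
  toFun a := toLex (toLex (degDiffs (Nat.cast ∘ a)), ε * a 0)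
  map_zero' := by simp
  map_add' a b := by
    have hcast : (Nat.cast ∘ (a + b) : Fin (m + 1) → ℤ) = Nat.cast ∘ a + Nat.cast ∘ b := by
      funext i; simp
    simp only [hcast, map_add, Pi.add_apply, Nat.cast_add, mul_add]
    rfl

theorem lexWeight_pos (ε : ℤ) {a : Fin (m + 1) → ℕ} (ha : a ≠ 0) : 0 < lexWeight ε a := by
  have hdeg : 0 < ∑ i, (a i : ℤ) := by
    obtain ⟨i, hi⟩ := Function.ne_iff.1 ha
    exact Finset.sum_pos' (fun j _ => by positivity)
      ⟨i, Finset.mem_univ i, by simpa [Nat.pos_iff_ne_zero] using hi⟩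
  have hrow : (0 : ℤ) < degDiffs (Nat.cast ∘ a : Fin (m + 1) → ℤ) 0 := by
    simpa [degDiffs] using hdeg
  exact Prod.Lex.toLex_lt_toLex.2 (Or.inl ⟨0, fun j hj => absurd hj (Fin.not_lt_zero j), hrow⟩)

theorem lexWeight_injective (hm : m ≠ 0) {ε : ℤ} (hε : ε ≠ 0) :
    Injective (lexWeight ε : (Fin (m + 1) → ℕ) → _) := by
  intro a b h
  simp only [lexWeight, AddMonoidHom.coe_mk, ZeroHom.coe_mk, toLex_inj, Prod.mk.injEq] at h
  have h0 : a 0 = b 0 := by exact_mod_cast mul_left_cancel₀ hε h.2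
  exact Nat.cast_injective.comp_left (eq_of_degDiffs_eq hm h.1 (i := 0) (by simp [h0]))

theorem lexWeight_lt_lexWeight_iff_of_degDiffs_eq (ε : ℤ) {a b : Fin (m + 1) → ℕ}
    (h : degDiffs (Nat.cast ∘ a : Fin (m + 1) → ℤ) = degDiffs (Nat.cast ∘ b)) :
    lexWeight ε a < lexWeight ε b ↔ ε * a 0 < ε * b 0 := by
  refine Prod.Lex.toLex_lt_toLex.trans ⟨fun hlt => ?_, fun hlt => Or.inr ⟨h ▸ rfl, hlt⟩⟩
  exact (hlt.resolve_left fun hlt' => lt_irrefl _ (h ▸ hlt')).2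

theorem lexWeight_lt_lexWeight_iff_of_apply_eq (hm : m ≠ 0) (ε : ℤ) {a b : Fin (m + 1) → ℕ}
    {i : Fin (m + 1)} (hi : a i = b i) :
    lexWeight ε a < lexWeight ε b ↔
      toLex (degDiffs (Nat.cast ∘ a : Fin (m + 1) → ℤ)) < toLex (degDiffs (Nat.cast ∘ b)) := by
  refine Prod.Lex.toLex_lt_toLex.trans ⟨fun h => h.resolve_right ?_, Or.inl⟩
  rintro ⟨h, hlt⟩
  obtain rfl : a = b :=
    Nat.cast_injective.comp_left (eq_of_degDiffs_eq hm (toLex_inj.1 h) (i := i) (by simp [hi]))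
  exact lt_irrefl _ hlt

end

/-- For every `n ≥ 4` there exist two distinct monomial orders on `ℕⁿ` whose
induced orderings agree for every `i`. -/
theorem stmt_16 {n : ℕ} (hn : 4 ≤ n) :
    ∃ r s : (Fin n → ℕ) → (Fin n → ℕ) → Prop,
      IsMonomialOrder r ∧ IsMonomialOrder s ∧ r ≠ s ∧
      ∀ i : Fin n, ∀ a b : Fin n → ℕ, a i = 0 → b i = 0 → (r a b ↔ s a b) := by
  obtain ⟨m, rfl⟩ : ∃ m, n = m + 2 := ⟨n - 2, by omega⟩
  have hm : m + 1 ≠ 0 := m.succ_ne_zero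
  refine ⟨fun a b => lexWeight 1 a < lexWeight 1 b,
    fun a b => lexWeight (-1) a < lexWeight (-1) b,
    isMonomialOrder_of_injective _ (lexWeight_injective hm one_ne_zero) fun _ => lexWeight_pos 1,
    isMonomialOrder_of_injective _ (lexWeight_injective hm (neg_ne_zero.2 one_ne_zero))
      fun _ => lexWeight_pos (-1),
    fun hrs => ?_, fun i a b ha hb => ?_⟩
  · let a : Fin (m + 2) → ℕ := Fin.cons (m + 1) 0
    let b : Fin (m + 2) → ℕ := Fin.cons 0 1
    have hab : degDiffs (Nat.cast ∘ a : Fin (m + 2) → ℤ) = degDiffs (Nat.cast ∘ b) := by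
      ext k
      cases k using Fin.cases <;>
        simp [degDiffs, Fin.sum_univ_succ, ← Fin.succ_last, a, b, add_comm]
    have hba : lexWeight 1 b < lexWeight 1 a :=
      (lexWeight_lt_lexWeight_iff_of_degDiffs_eq 1 hab.symm).2 (by simp [a, b])
    have hab' : lexWeight (-1) a < lexWeight (-1) b :=
      (lexWeight_lt_lexWeight_iff_of_degDiffs_eq (-1) hab).2 (by simp [a, b]; omega)
    exact lt_asymm hba ((congrFun₂ hrs a b).mpr hab')
  · exact (lexWeight_lt_lexWeight_iff_of_apply_eq hm 1 (ha.trans hb.symm)).trans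
      (lexWeight_lt_lexWeight_iff_of_apply_eq hm (-1) (ha.trans hb.symm)).symm
end
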